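/- arXiv:0904.1045 — 7 statements merged into one kernel-verified Lean document; each statement's English description precedes it below -/
import Mathlib

section
/- The 2-cochain τ on gl_l ⊗ C_q defined by τ(E_{ij}⊗s^{m1}t^{n1}, E_{kn}⊗s^{m2}t^{n2}) = δ_{jk} δ_{in} δ_{m1+m2,0} δ_{n1+n2,0} q^{n1 m2} (m1·c_s + n1·c_t), valued in the abelian Lie algebra C c_s ⊕ C c_t, is a Lie algebra 2-cocycle; hence gl_l⊗C_q ⊕ C c_s ⊕ C c_t with the bracket [x+z, x'+z'] = [x,x'] + τ(x,x') is a Lie algebra (a central extension of gl_l ⊗ C_q). -/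
/-- The space `gl_l ⊗ ℂ_q`, with basis `E_{ij} ⊗ s^m t^n` indexed by
`((i,j),(m,n)) ∈ (Fin l × Fin l) × (ℤ × ℤ)`. -/
abbrev G (l : ℕ) := ((Fin l × Fin l) × ℤ × ℤ) →₀ ℂ

/-- The basis element `E_{ij} ⊗ s^m t^n`. -/
noncomputable def basisElt (l : ℕ) (i j : Fin l) (m n : ℤ) : G l :=
  Finsupp.single ((i, j), (m, n)) 1

/-- The bracket on `gl_l ⊗ ℂ_q`, defined bilinearly from
`[E_{ij}⊗s^{m1}t^{n1}, E_{kn}⊗s^{m2}t^{n2}]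
  = δ_{jk} q^{n1 m2} E_{in}⊗s^{m1+m2}t^{n1+n2} − δ_{in} q^{n2 m1} E_{kj}⊗s^{m1+m2}t^{n1+n2}`. -/
noncomputable def brkt (l : ℕ) (q : ℂ) (x y : G l) : G l :=
  x.sum fun a ca => y.sum fun b cb =>
    (ca * cb) •
      ((if a.1.2 = b.1.1 then
          q ^ (a.2.2 * b.2.1) • basisElt l a.1.1 b.1.2 (a.2.1 + b.2.1) (a.2.2 + b.2.2)
        else 0)
      - (if a.1.1 = b.1.2 then
          q ^ (b.2.2 * a.2.1) • basisElt l b.1.1 a.1.2 (a.2.1 + b.2.1) (a.2.2 + b.2.2)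
        else 0))

/-- The 2-cochain `τ` with values in `ℂ c_s ⊕ ℂ c_t ≅ ℂ × ℂ`, defined bilinearly from
`τ(E_{ij}⊗s^{m1}t^{n1}, E_{kn}⊗s^{m2}t^{n2})
  = δ_{jk} δ_{in} δ_{m1+m2,0} δ_{n1+n2,0} q^{n1 m2} (m1·c_s + n1·c_t)`. -/
noncomputable def tau (l : ℕ) (q : ℂ) (x y : G l) : ℂ × ℂ :=
  x.sum fun a ca => y.sum fun b cb =>
    (ca * cb) •
      (if a.1.2 = b.1.1 ∧ a.1.1 = b.1.2 ∧ a.2.1 + b.2.1 = 0 ∧ a.2.2 + b.2.2 = 0 then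
        q ^ (a.2.2 * b.2.1) • ((a.2.1 : ℂ), (a.2.2 : ℂ))
      else 0)

/-- The bracket on the central extension `gl_l⊗ℂ_q ⊕ ℂ c_s ⊕ ℂ c_t`:
`[x+z, x'+z'] = [x,x'] + τ(x,x')`. -/
noncomputable def brktExt (l : ℕ) (q : ℂ) (u v : G l × (ℂ × ℂ)) : G l × (ℂ × ℂ) :=
  (brkt l q u.1 v.1, tau l q u.1 v.1)

/-!
`brkt` is the commutator of the associative product of `l × l` matrices over the quantum torus,
`(E_{ij} s^{m₁}t^{n₁}) (E_{kn} s^{m₂}t^{n₂}) = δ_{jk} q^{n₁m₂} E_{in} s^{m₁+m₂}t^{n₁+n₂}`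
(associativity needs `q ≠ 0`, since `q ^ a * q ^ b = q ^ (a + b)` fails for `q = 0` and integer
exponents), so it satisfies the Jacobi identity.

Write `φ` for the trace followed by the coefficient of `s⁰t⁰`, and `D_s`, `D_t` for the derivations
multiplying `s^m t^n` by `m`, resp. `n`. Then `φ(xy) = φ(yx)`, `φ ∘ D = 0`, and the components of
`τ` are `(x, y) ↦ φ(D x · y)`. Any such form is a 2-cocycle for the commutator bracket:
antisymmetry is `φ(D(xy)) = 0`, and with `T_x = φ(D x · [y, z])` one computes
`τ([x, y], z) = T_x + T_y` (Leibniz rule and cyclicity of `φ`) and `τ([x, y], z) = -T_z`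
(from `φ(D([x, y] z)) = 0`). Hence `T_x + T_y + T_z = 0`, and the cyclic sum of
`τ([x, y], z) = -T_z` vanishes.
-/

namespace Finsupp

variable {ι R M : Type*} [CommSemiring R] [AddCommMonoid M] [Module R M]

noncomputable def bilinLift (F : ι → ι → M) : (ι →₀ R) →ₗ[R] (ι →₀ R) →ₗ[R] M :=
  linearCombination R fun a => linearCombination R (F a)

theorem bilinLift_apply (F : ι → ι → M) (x y : ι →₀ R) :
    bilinLift F x y = x.sum fun a ca => y.sum fun b cb => (ca * cb) • F a b := by
  simp [bilinLift, linearCombination_apply, Finsupp.sum, Finset.smul_sum, smul_smul]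

@[simp]
theorem bilinLift_single (F : ι → ι → M) (a b : ι) (c d : R) :
    bilinLift F (single a c) (single b d) = (c * d) • F a b := by
  simp [bilinLift, smul_smul]

theorem map_bilinLift_eq_of_single {N : Type*} [AddCommMonoid N] [Module R N] (F : ι → ι → M)
    (g : M →ₗ[R] N) (Φ : (ι →₀ R) →ₗ[R] (ι →₀ R) →ₗ[R] N)
    (hF : ∀ a b, g (F a b) = Φ (single a 1) (single b 1)) (x y : ι →₀ R) :
    g (bilinLift F x y) = Φ x y := by
  suffices h : (bilinLift F).compr₂ g = Φ from congr($h x y)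
  ext a b
  simp [hF]

theorem bilinLift_sub_swap {M : Type*} [AddCommGroup M] [Module R M] (F : ι → ι → M)
    (x y : ι →₀ R) :
    bilinLift (fun a b => F a b - F b a) x y = bilinLift F x y - bilinLift F y x := by
  suffices h : bilinLift (fun a b => F a b - F b a) = bilinLift F - (bilinLift F).flip
    from congr($h x y)
  ext a b
  simp

end Finsupp

section AssociativeProduct

variable {R V M : Type*} [CommSemiring R] [AddCommGroup V] [Module R V] [AddCommGroup M] [Module R M]
  {B : V →ₗ[R] V →ₗ[R] V}

theorem jacobi_of_assoc (hB : ∀ x y z, B (B x y) z = B x (B y z)) (x y z : V) :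
    B (B x y - B y x) z - B z (B x y - B y x) + (B (B y z - B z y) x - B x (B y z - B z y))
      + (B (B z x - B x z) y - B y (B z x - B x z)) = 0 := by
  simp only [map_sub, LinearMap.sub_apply, hB]
  abel

variable {D : V →ₗ[R] V} {φ : V →ₗ[R] M}

theorem trace_derivation_antisymm (hD : ∀ x y, D (B x y) = B (D x) y + B x (D y))
    (hφ : ∀ x y, φ (B x y) = φ (B y x)) (hφD : ∀ x, φ (D x) = 0) (x y : V) :
    φ (B (D x) y) = -φ (B (D y) x) := by
  rw [eq_neg_iff_add_eq_zero, hφ (D y), ← map_add, ← hD, hφD]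

theorem trace_derivation_cocycle (hB : ∀ x y z, B (B x y) z = B x (B y z))
    (hD : ∀ x y, D (B x y) = B (D x) y + B x (D y))
    (hφ : ∀ x y, φ (B x y) = φ (B y x)) (hφD : ∀ x, φ (D x) = 0) (x y z : V) :
    φ (B (D (B x y - B y x)) z) + φ (B (D (B y z - B z y)) x)
      + φ (B (D (B z x - B x z)) y) = 0 := by
  have h₁ : ∀ x y z, φ (B (D (B x y - B y x)) z) = -φ (B (D z) (B x y - B y x)) := by
    intro x y z
    rw [eq_neg_iff_add_eq_zero, hφ (D z), ← map_add, ← hD, hφD]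
  have h₂ : φ (B (D (B x y - B y x)) z)
      = φ (B (D x) (B y z - B z y)) + φ (B (D y) (B z x - B x z)) := by
    simp only [map_sub, hD, map_add, LinearMap.sub_apply, LinearMap.add_apply, hB]
    rw [hφ x, hφ y]
    simp only [hB]
    abel
  rw [h₁ x y z, h₁ y z x, h₁ z x y, (h₁ x y z).symm.trans h₂]
  abel

end AssociativeProduct

section QuantumTorusMatrices

open Finsupp

variable (l : ℕ) (q : ℂ)

noncomputable def qmul : G l →ₗ[ℂ] G l →ₗ[ℂ] G l :=
  bilinLift fun a b => if a.1.2 = b.1.1 then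
    q ^ (a.2.2 * b.2.1) • basisElt l a.1.1 b.1.2 (a.2.1 + b.2.1) (a.2.2 + b.2.2) else 0

theorem qmul_single (i j k n : Fin l) (m₁ n₁ m₂ n₂ : ℤ) (c d : ℂ) :
    qmul l q (single ((i, j), m₁, n₁) c) (single ((k, n), m₂, n₂) d)
      = if j = k then single ((i, n), m₁ + m₂, n₁ + n₂) (c * d * q ^ (n₁ * m₂)) else 0 := by
  simp only [qmul, bilinLift_single, basisElt, smul_ite, smul_zero, smul_single, smul_eq_mul,
    mul_one]

theorem qmul_assoc (hq : q ≠ 0) (x y z : G l) :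
    qmul l q (qmul l q x y) z = qmul l q x (qmul l q y z) := by
  suffices h : (qmul l q).compr₂ (qmul l q)
      = (LinearMap.llcomp ℂ _ _ _ ∘ₗ qmul l q).compl₂ (qmul l q) from congr($h x y z)
  ext ⟨⟨i₁, j₁⟩, m₁, n₁⟩ ⟨⟨i₂, j₂⟩, m₂, n₂⟩ ⟨⟨i₃, j₃⟩, m₃, n₃⟩ : 6
  simp only [LinearMap.compr₂_apply, LinearMap.compl₂_apply, LinearMap.comp_apply,
    LinearMap.llcomp_apply, lsingle_apply, qmul_single]
  by_cases h₁ : j₁ = i₂ <;> by_cases h₂ : j₂ = i₃ <;>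
    simp only [h₁, h₂, if_true, if_false, map_zero, LinearMap.zero_apply, qmul_single]
  simp only [add_assoc, one_mul, mul_one, ← zpow_add₀ hq]
  ring_nf

theorem brkt_eq_qmul_sub (x y : G l) : brkt l q x y = qmul l q x y - qmul l q y x := by
  rw [qmul, ← bilinLift_sub_swap, bilinLift_apply]
  refine sum_congr fun a _ => sum_congr fun b _ => ?_
  simp only [add_comm b.2.1, add_comm b.2.2, eq_comm (a := b.1.2)]

noncomputable def degDeriv (w : ℤ × ℤ →+ ℤ) : G l →ₗ[ℂ] G l :=
  linearCombination ℂ fun a => single a (w a.2 : ℂ)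

theorem degDeriv_single (w : ℤ × ℤ →+ ℤ) (a : (Fin l × Fin l) × ℤ × ℤ) (c : ℂ) :
    degDeriv l w (single a c) = single a (w a.2 * c) := by
  simp [degDeriv, smul_single, mul_comm]

theorem degDeriv_qmul (w : ℤ × ℤ →+ ℤ) (x y : G l) :
    degDeriv l w (qmul l q x y) = qmul l q (degDeriv l w x) y + qmul l q x (degDeriv l w y) := by
  suffices h : (qmul l q).compr₂ (degDeriv l w)
      = qmul l q ∘ₗ degDeriv l w + (qmul l q).compl₂ (degDeriv l w) from congr($h x y)
  ext ⟨⟨i₁, j₁⟩, m₁, n₁⟩ ⟨⟨i₂, j₂⟩, m₂, n₂⟩ : 4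
  simp only [LinearMap.compr₂_apply, LinearMap.compl₂_apply, LinearMap.comp_apply,
    LinearMap.add_apply, lsingle_apply, degDeriv_single, qmul_single]
  split_ifs
  · rw [degDeriv_single, ← single_add]
    simp only [← Prod.mk_add_mk, map_add]
    push_cast
    ring_nf
  · simp

noncomputable def constTrace : G l →ₗ[ℂ] ℂ :=
  linearCombination ℂ fun a => if a.1.1 = a.1.2 ∧ a.2 = 0 then 1 else 0

theorem constTrace_single (a : (Fin l × Fin l) × ℤ × ℤ) (c : ℂ) :
    constTrace l (single a c) = if a.1.1 = a.1.2 ∧ a.2 = 0 then c else 0 := by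
  simp [constTrace]

theorem constTrace_qmul_comm (x y : G l) :
    constTrace l (qmul l q x y) = constTrace l (qmul l q y x) := by
  suffices h : (qmul l q).compr₂ (constTrace l) = ((qmul l q).compr₂ (constTrace l)).flip
    from congr($h x y)
  ext ⟨⟨i₁, j₁⟩, m₁, n₁⟩ ⟨⟨i₂, j₂⟩, m₂, n₂⟩
  simp only [LinearMap.compr₂_apply, LinearMap.flip_apply, LinearMap.comp_apply, lsingle_apply,
    qmul_single, apply_ite (constTrace l), map_zero, constTrace_single, Prod.mk_eq_zero]
  by_cases h : m₁ + m₂ = 0 ∧ n₁ + n₂ = 0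
  · obtain ⟨rfl, rfl⟩ : m₂ = -m₁ ∧ n₂ = -n₁ := by omega
    simp only [add_neg_cancel, neg_add_cancel, and_true, neg_mul, mul_comm n₁]
    by_cases h₁ : j₁ = i₂ <;> by_cases h₂ : i₁ = j₂ <;> simp [h₁, h₂, eq_comm]
  · simp [h, add_comm m₂, add_comm n₂]

theorem constTrace_degDeriv (w : ℤ × ℤ →+ ℤ) (x : G l) : constTrace l (degDeriv l w x) = 0 := by
  suffices h : constTrace l ∘ₗ degDeriv l w = 0 from congr($h x)
  ext a
  simp +contextual [degDeriv_single, constTrace_single]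

theorem constTrace_qmul_degDeriv_single (w : ℤ × ℤ →+ ℤ) (a b : (Fin l × Fin l) × ℤ × ℤ) :
    constTrace l (qmul l q (degDeriv l w (single a 1)) (single b 1))
      = if a.1.2 = b.1.1 ∧ a.1.1 = b.1.2 ∧ a.2.1 + b.2.1 = 0 ∧ a.2.2 + b.2.2 = 0 then
          q ^ (a.2.2 * b.2.1) * w a.2 else 0 := by
  obtain ⟨⟨i₁, j₁⟩, m₁, n₁⟩ := a
  obtain ⟨⟨i₂, j₂⟩, m₂, n₂⟩ := b
  simp only [degDeriv_single, qmul_single, apply_ite (constTrace l), map_zero, constTrace_single,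
    Prod.mk_eq_zero]
  by_cases h₁ : j₁ = i₂ <;> by_cases h₂ : i₁ = j₂ <;> simp [h₁, h₂, mul_comm]

theorem tau_eq (x y : G l) :
    tau l q x y = (constTrace l (qmul l q (degDeriv l (AddMonoidHom.fst ℤ ℤ) x) y),
      constTrace l (qmul l q (degDeriv l (AddMonoidHom.snd ℤ ℤ) x) y)) := by
  have hτ : tau l q x y = bilinLift _ x y := (bilinLift_apply _ x y).symm
  rw [hτ]
  refine Prod.ext (map_bilinLift_eq_of_single _ (LinearMap.fst ℂ ℂ ℂ)
      ((qmul l q ∘ₗ degDeriv l (AddMonoidHom.fst ℤ ℤ)).compr₂ (constTrace l)) ?_ x y)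
    (map_bilinLift_eq_of_single _ (LinearMap.snd ℂ ℂ ℂ)
      ((qmul l q ∘ₗ degDeriv l (AddMonoidHom.snd ℤ ℤ)).compr₂ (constTrace l)) ?_ x y) <;>
  · intro a b
    simp only [LinearMap.compr₂_apply, LinearMap.comp_apply, constTrace_qmul_degDeriv_single]
    split_ifs <;> simp

theorem brkt_antisymm (x y : G l) : brkt l q x y = -brkt l q y x := by
  rw [brkt_eq_qmul_sub, brkt_eq_qmul_sub, neg_sub]

theorem brkt_jacobi (hq : q ≠ 0) (x y z : G l) :
    brkt l q (brkt l q x y) z + brkt l q (brkt l q y z) x + brkt l q (brkt l q z x) y = 0 := by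
  simp only [brkt_eq_qmul_sub]
  exact jacobi_of_assoc (qmul_assoc l q hq) x y z

theorem tau_antisymm (x y : G l) : tau l q x y = -tau l q y x := by
  rw [tau_eq, tau_eq]
  refine Prod.ext ?_ ?_ <;>
    exact trace_derivation_antisymm (degDeriv_qmul l q _) (constTrace_qmul_comm l q)
      (constTrace_degDeriv l _) x y

theorem tau_cocycle (hq : q ≠ 0) (x y z : G l) :
    tau l q (brkt l q x y) z + tau l q (brkt l q y z) x + tau l q (brkt l q z x) y = 0 := by
  simp only [tau_eq, brkt_eq_qmul_sub, Prod.mk_add_mk, Prod.mk_eq_zero]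
  constructor <;>
    exact trace_derivation_cocycle (qmul_assoc l q hq) (degDeriv_qmul l q _)
      (constTrace_qmul_comm l q) (constTrace_degDeriv l _) x y z

end QuantumTorusMatrices

theorem stmt2_general (l : ℕ) (q : ℂ) (hq : q ≠ 0) :
    (∀ x y : G l, tau l q x y = -tau l q y x) ∧
    (∀ x y z : G l,
      tau l q (brkt l q x y) z + tau l q (brkt l q y z) x + tau l q (brkt l q z x) y = 0) ∧
    (∀ u v : G l × (ℂ × ℂ), brktExt l q u v = -brktExt l q v u) ∧
    (∀ u v w : G l × (ℂ × ℂ),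
      brktExt l q (brktExt l q u v) w + brktExt l q (brktExt l q v w) u
        + brktExt l q (brktExt l q w u) v = 0) :=
  ⟨tau_antisymm l q, tau_cocycle l q hq,
    fun u v => Prod.ext (brkt_antisymm l q u.1 v.1) (tau_antisymm l q u.1 v.1),
    fun u v w => Prod.ext (brkt_jacobi l q hq u.1 v.1 w.1) (tau_cocycle l q hq u.1 v.1 w.1)⟩

/-- `τ` is a Lie algebra 2-cocycle (antisymmetric and satisfying the cocycle identity);
hence the extended bracket on `gl_l⊗ℂ_q ⊕ ℂ c_s ⊕ ℂ c_t` is antisymmetric and satisfies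
the Jacobi identity, so it is a Lie algebra (a central extension of `gl_l ⊗ ℂ_q`). -/
theorem stmt2 (l : ℕ) (hl : 2 ≤ l) (q : ℂ) (hq : q ≠ 0) :
    (∀ x y : G l, tau l q x y = -tau l q y x) ∧
    (∀ x y z : G l,
      tau l q (brkt l q x y) z + tau l q (brkt l q y z) x + tau l q (brkt l q z x) y = 0) ∧
    (∀ u v : G l × (ℂ × ℂ), brktExt l q u v = -brktExt l q v u) ∧
    (∀ u v w : G l × (ℂ × ℂ),
      brktExt l q (brktExt l q u v) w + brktExt l q (brktExt l q v w) u
        + brktExt l q (brktExt l q w u) v = 0) :=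
  stmt2_general l q hq
end

section
/- Let V = C[x_i(m,n) : 2 ≤ i ≤ l, (m,n) ∈ Z²] and for 2 ≤ i,j ≤ l define operators e_{ij}(m1,n1) = Σ_{(m,n)∈Z²} q^{m n1} x_i(m1+m, n1+n) ∂/∂x_j(m,n) on V. Then for all 2 ≤ i,j,k,r ≤ l and integers m1,n1,m2,n2: [e_{ij}(m1,n1), e_{kr}(m2,n2)] = δ_{jk} q^{m2 n1} e_{ir}(m1+m2, n1+n2) − δ_{ir} q^{m1 n2} e_{kj}(m1+m2, n1+n2). -/
/-!
Each `e_{ij}(m₁,n₁)` is a derivation of `V`: on a given polynomial only the finitely many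
`∂/∂x_j(m,n)` with `x_j(m,n)` occurring in it act. Commutators and linear combinations of
derivations are derivations, so both sides of the identity are derivations of a polynomial ring
and it suffices to compare them on the generators, where
`e_{ij}(m₁,n₁) x_a(m,n) = δ_{aj} q^{m n₁} x_i(m₁+m, n₁+n)`.
-/

open MvPolynomial

/-- Index set `{2, …, l}` for the variables. -/
abbrev Idx (l : ℕ) := {i : ℕ // 2 ≤ i ∧ i ≤ l}

/-- The polynomial ring `V = ℂ[x_i(m,n) : 2 ≤ i ≤ l, (m,n) ∈ ℤ²]`. -/
abbrev V (l : ℕ) := MvPolynomial (Idx l × ℤ × ℤ) ℂ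

/-- `e_{ij}(m1,n1) = Σ_{(m,n)} q^{m n1} x_i(m1+m, n1+n) ∂/∂x_j(m,n)`, for `2 ≤ i,j ≤ l`. -/
noncomputable def eGen (l : ℕ) (q : ℂ) (i j : Idx l) (m1 n1 : ℤ) (p : V l) : V l :=
  ∑ᶠ mn : ℤ × ℤ,
    q ^ (mn.1 * n1) • (X (i, m1 + mn.1, n1 + mn.2) * pderiv (j, mn.1, mn.2) p)

/-- `e_{i1}(m,n)` = multiplication by the variable `x_i(m,n)`. -/
noncomputable def eLow (l : ℕ) (i : Idx l) (m n : ℤ) (p : V l) : V l :=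
  X (i, m, n) * p

/-- `e_{11}(m1,n1) = μ δ_{(m1,n1),(0,0)} − Σ_{j=2}^l Σ_{(m,n)} q^{n m1} x_j(m1+m, n1+n) ∂/∂x_j(m,n)`. -/
noncomputable def e11 (l : ℕ) (q μ : ℂ) (m1 n1 : ℤ) (p : V l) : V l :=
  (if (m1, n1) = ((0 : ℤ), (0 : ℤ)) then μ else 0) • p
  - ∑ᶠ j : Idx l, ∑ᶠ mn : ℤ × ℤ,
      q ^ (mn.2 * m1) • (X (j, m1 + mn.1, n1 + mn.2) * pderiv (j, mn.1, mn.2) p)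

/-- `e_{1i}(m1,n1) = q^{−m1 n1} μ ∂/∂x_i(−m1,−n1)
  − Σ_{j=2}^l Σ_{(m,n),(m',n')} q^{n1 m' + n m1 + n m'}
      x_j(m1+m+m', n1+n+n') ∂/∂x_j(m,n) ∂/∂x_i(m',n')`, for `2 ≤ i ≤ l`. -/
noncomputable def eUp (l : ℕ) (q μ : ℂ) (i : Idx l) (m1 n1 : ℤ) (p : V l) : V l :=
  q ^ (-(m1 * n1)) • μ • pderiv (i, -m1, -n1) p
  - ∑ᶠ j : Idx l, ∑ᶠ mm : (ℤ × ℤ) × (ℤ × ℤ),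
      q ^ (n1 * mm.2.1 + mm.1.2 * m1 + mm.1.2 * mm.2.1) •
        (X (j, m1 + mm.1.1 + mm.2.1, n1 + mm.1.2 + mm.2.2) *
          pderiv (j, mm.1.1, mm.1.2) (pderiv (i, mm.2.1, mm.2.2) p))

/-- Degree operator `D1 = Σ_{i=2}^l Σ_{(m,n)} m · x_i(m,n) ∂/∂x_i(m,n)`. -/
noncomputable def D1 (l : ℕ) (p : V l) : V l :=
  ∑ᶠ i : Idx l, ∑ᶠ mn : ℤ × ℤ,
    (mn.1 : ℂ) • (X (i, mn.1, mn.2) * pderiv (i, mn.1, mn.2) p)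

/-- Degree operator `D2 = Σ_{i=2}^l Σ_{(m,n)} n · x_i(m,n) ∂/∂x_i(m,n)`. -/
noncomputable def D2 (l : ℕ) (p : V l) : V l :=
  ∑ᶠ i : Idx l, ∑ᶠ mn : ℤ × ℤ,
    (mn.2 : ℂ) • (X (i, mn.1, mn.2) * pderiv (i, mn.1, mn.2) p)

/-- Commutator `[A,B] = A∘B − B∘A` of operators on `V`. -/
noncomputable def oComm {l : ℕ} (A B : V l → V l) : V l → V l := fun p => A (B p) - B (A p)

namespace MvPolynomial

variable {R σ ι : Type*} [CommRing R] {g : ι → σ}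

theorem hasFiniteSupport_mul_pderiv (hg : Function.Injective g) (c : ι → MvPolynomial σ R)
    (p : MvPolynomial σ R) : Function.HasFiniteSupport fun t => c t * pderiv (g t) p := by
  refine (p.vars.finite_toSet.preimage hg.injOn).subset fun t ht => ?_
  by_contra hv
  exact ht (by simp only [pderiv_eq_zero_of_notMem_vars hv, mul_zero])

noncomputable def finsumMulPderiv (hg : Function.Injective g) (c : ι → MvPolynomial σ R) :
    Derivation R (MvPolynomial σ R) (MvPolynomial σ R) where
  toFun p := ∑ᶠ t, c t * pderiv (g t) p
  map_add' p p' := by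
    simp only [map_add, mul_add]
    exact finsum_add_distrib (hasFiniteSupport_mul_pderiv hg c p)
      (hasFiniteSupport_mul_pderiv hg c p')
  map_smul' a p := by
    change ∑ᶠ t, c t * pderiv (g t) (a • p) = a • ∑ᶠ t, c t * pderiv (g t) p
    simp only [Derivation.map_smul, mul_smul_comm]
    exact smul_finsum' a (hasFiniteSupport_mul_pderiv hg c p) |>.symm
  map_one_eq_zero' := by simp
  leibniz' p p' := by
    change ∑ᶠ t, c t * pderiv (g t) (p * p') =
      p * ∑ᶠ t, c t * pderiv (g t) p' + p' * ∑ᶠ t, c t * pderiv (g t) p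
    simp only [Derivation.leibniz, smul_eq_mul, mul_add, mul_left_comm (c _)]
    rw [finsum_add_distrib, mul_finsum' _ _ (hasFiniteSupport_mul_pderiv hg c p'),
      mul_finsum' _ _ (hasFiniteSupport_mul_pderiv hg c p)]
    · exact (hasFiniteSupport_mul_pderiv hg c p').subset (Function.support_mul_subset_right _ _)
    · exact (hasFiniteSupport_mul_pderiv hg c p).subset (Function.support_mul_subset_right _ _)

theorem finsumMulPderiv_apply (hg : Function.Injective g) (c : ι → MvPolynomial σ R)
    (p : MvPolynomial σ R) : finsumMulPderiv hg c p = ∑ᶠ t, c t * pderiv (g t) p :=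
  rfl

theorem finsumMulPderiv_X_apply (hg : Function.Injective g) (c : ι → MvPolynomial σ R)
    (t : ι) : finsumMulPderiv hg c (X (g t)) = c t := by
  classical
  rw [finsumMulPderiv_apply, finsum_eq_single _ t fun t' ht' => ?_, pderiv_X, Pi.single_eq_same,
    mul_one]
  rw [pderiv_X, Pi.single_eq_of_ne (hg.ne ht').symm, mul_zero]

theorem finsumMulPderiv_X_of_notMem_range (hg : Function.Injective g)
    (c : ι → MvPolynomial σ R) {v : σ} (hv : v ∉ Set.range g) :
    finsumMulPderiv hg c (X v) = 0 := by
  classical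
  refine finsum_eq_zero_of_forall_eq_zero fun t => ?_
  rw [pderiv_X, Pi.single_eq_of_ne fun h => hv ⟨t, h.symm⟩, mul_zero]

end MvPolynomial

section

variable (l : ℕ) (q : ℂ) (i j : Idx l) (m1 n1 : ℤ)

noncomputable def eGenDerivation : Derivation ℂ (V l) (V l) :=
  finsumMulPderiv (Prod.mk_right_injective j) fun mn : ℤ × ℤ =>
    q ^ (mn.1 * n1) • X (i, m1 + mn.1, n1 + mn.2)

theorem coe_eGenDerivation : ⇑(eGenDerivation l q i j m1 n1) = eGen l q i j m1 n1 :=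
  funext fun _ => finsum_congr fun _ => smul_mul_assoc _ _ _

theorem eGenDerivation_X (a : Idx l) (m n : ℤ) :
    eGenDerivation l q i j m1 n1 (X (a, m, n)) =
      if a = j then q ^ (m * n1) • X (i, m1 + m, n1 + n) else 0 := by
  split_ifs with h
  · subst h
    exact finsumMulPderiv_X_apply _ _ (m, n)
  · exact finsumMulPderiv_X_of_notMem_range _ _ fun ⟨_, e⟩ => h (congrArg Prod.fst e).symm

end

theorem eGenDerivation_eGenDerivation_X {l : ℕ} {q : ℂ} (hq : q ≠ 0) (i j k r a : Idx l)
    (m1 n1 m2 n2 m n : ℤ) :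
    eGenDerivation l q i j m1 n1 (eGenDerivation l q k r m2 n2 (X (a, m, n))) =
      if a = r ∧ j = k then
        q ^ (m2 * n1) • q ^ (m * (n1 + n2)) • X (i, m1 + m2 + m, n1 + n2 + n)
      else 0 := by
  rw [eGenDerivation_X]
  by_cases har : a = r
  · rw [if_pos har, Derivation.map_smul, eGenDerivation_X]
    by_cases hjk : j = k
    · rw [if_pos hjk.symm, if_pos ⟨har, hjk⟩, smul_smul, smul_smul, ← zpow_add₀ hq,
        ← zpow_add₀ hq, add_assoc m1, add_assoc n1,
        show m * n2 + (m2 + m) * n1 = m2 * n1 + m * (n1 + n2) by ring]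
    · rw [if_neg (Ne.symm hjk), if_neg fun h => hjk h.2, smul_zero]
  · rw [if_neg har, if_neg fun h => har h.1, map_zero]

theorem eGenDerivation_lie {l : ℕ} {q : ℂ} (hq : q ≠ 0) (i j k r : Idx l)
    (m1 n1 m2 n2 : ℤ) :
    ⁅eGenDerivation l q i j m1 n1, eGenDerivation l q k r m2 n2⁆ =
      (if j = k then q ^ (m2 * n1) else 0) • eGenDerivation l q i r (m1 + m2) (n1 + n2)
      - (if i = r then q ^ (m1 * n2) else 0) • eGenDerivation l q k j (m1 + m2) (n1 + n2) := by
  refine derivation_ext fun ⟨a, m, n⟩ => ?_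
  rw [Derivation.commutator_apply, eGenDerivation_eGenDerivation_X hq,
    eGenDerivation_eGenDerivation_X hq, Derivation.sub_apply, Derivation.smul_apply,
    Derivation.smul_apply, eGenDerivation_X, eGenDerivation_X, add_comm m2 m1, add_comm n2 n1]
  by_cases har : a = r <;> by_cases haj : a = j <;> by_cases hjk : j = k <;>
    by_cases hir : i = r <;> subst_vars <;> simp_all [eq_comm]

theorem stmt3_general (l : ℕ) (q : ℂ) (hq : q ≠ 0)
    (i j k r : Idx l) (m1 n1 m2 n2 : ℤ) :
    oComm (eGen l q i j m1 n1) (eGen l q k r m2 n2) = fun p =>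
      (if j = k then q ^ (m2 * n1) else 0) • eGen l q i r (m1 + m2) (n1 + n2) p
      - (if i = r then q ^ (m1 * n2) else 0) • eGen l q k j (m1 + m2) (n1 + n2) p := by
  funext p
  have h := DFunLike.congr_fun (eGenDerivation_lie hq i j k r m1 n1 m2 n2) p
  rw [Derivation.commutator_apply, Derivation.sub_apply, Derivation.smul_apply,
    Derivation.smul_apply] at h
  simpa only [oComm, coe_eGenDerivation] using h

theorem stmt3 (l : ℕ) (hl : 2 ≤ l) (q : ℂ) (hq : q ≠ 0)
    (i j k r : Idx l) (m1 n1 m2 n2 : ℤ) :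
    oComm (eGen l q i j m1 n1) (eGen l q k r m2 n2) = fun p =>
      (if j = k then q ^ (m2 * n1) else 0) • eGen l q i r (m1 + m2) (n1 + n2) p
      - (if i = r then q ^ (m1 * n2) else 0) • eGen l q k j (m1 + m2) (n1 + n2) p :=
  stmt3_general l q hq i j k r m1 n1 m2 n2
end

section
/- With e_{i1}(m1,n1) = multiplication by x_i(m1,n1) and e_{11}(m2,n2) = μ δ_{(m2,n2),(0,0)} − Σ_{j=2}^l Σ_{(m,n)} q^{n m2} x_j(m2+m, n2+n) ∂/∂x_j(m,n), one has [e_{i1}(m1,n1), e_{11}(m2,n2)] = q^{n1 m2} e_{i1}(m1+m2, n1+n2) for all 2 ≤ i ≤ l and m1,n1,m2,n2 ∈ Z. -/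
open MvPolynomial

/-
Commute both parts of `e₁₁(m₂,n₂)` past multiplication by `x = x_i(m₁,n₁)`. The term `μδ` is a
scalar. The rest, `S = Σ_j Σ_{(m,n)} q^{n m₂} x_j(m₂+m, n₂+n) ∂/∂x_j(m,n)`, is a locally finite sum
of derivations, hence a derivation, so `[x, e₁₁] = [S, x]` is multiplication by `S(x)`. Only the
term `(j,m,n) = (i,m₁,n₁)` of `S` sees `x`, which gives `S(x) = q^{n₁ m₂} x_i(m₁+m₂, n₁+n₂)`.
-/

open Function

section Leibniz

variable {ι A : Type*} [CommSemiring A]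

theorem finsum_leibniz {f : ι → A → A} (hf : ∀ k a b, f k (a * b) = a * f k b + b * f k a)
    (hfin : ∀ a, HasFiniteSupport fun k => f k a) (a b : A) :
    ∑ᶠ k, f k (a * b) = a * ∑ᶠ k, f k b + b * ∑ᶠ k, f k a := by
  simp only [hf]
  rw [finsum_add_distrib ((hfin b).fun_mul_right _) ((hfin a).fun_mul_right _),
    mul_finsum' _ _ (hfin b), mul_finsum' _ _ (hfin a)]

end Leibniz

namespace MvPolynomial

variable {R σ : Type*} [CommSemiring R]

theorem hasFiniteSupport_pderiv_comp {κ : Type*} {e : κ → σ} (he : Injective e)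
    (p : MvPolynomial σ R) : HasFiniteSupport fun k => pderiv (e k) p :=
  (p.vars.finite_toSet.preimage he.injOn).subset fun _ hk => by
    by_contra h
    exact hk (pderiv_eq_zero_of_notMem_vars h)

theorem smul_X_mul_pderiv_mul (c : R) (u w : σ) (a b : MvPolynomial σ R) :
    c • (X u * pderiv w (a * b)) = a * (c • (X u * pderiv w b)) + b * (c • (X u * pderiv w a)) := by
  simp only [pderiv_mul, smul_eq_C_mul]
  ring

end MvPolynomial

open MvPolynomial

instance (l : ℕ) : Finite (Idx l) := (Set.finite_Icc 2 l).to_subtype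

noncomputable def e11Derivation (l : ℕ) (q : ℂ) (m2 n2 : ℤ) (p : V l) : V l :=
  ∑ᶠ j : Idx l, ∑ᶠ mn : ℤ × ℤ,
    q ^ (mn.2 * m2) • (X (j, m2 + mn.1, n2 + mn.2) * pderiv (j, mn.1, mn.2) p)

section e11Derivation

variable {l : ℕ} (q : ℂ) (m2 n2 : ℤ)

theorem e11_apply (μ : ℂ) (p : V l) :
    e11 l q μ m2 n2 p = (if (m2, n2) = ((0 : ℤ), (0 : ℤ)) then μ else 0) • p
      - e11Derivation l q m2 n2 p :=
  rfl

theorem e11Derivation_mul (a b : V l) :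
    e11Derivation l q m2 n2 (a * b) =
      a * e11Derivation l q m2 n2 b + b * e11Derivation l q m2 n2 a := by
  have hinj (j : Idx l) : Injective fun mn : ℤ × ℤ => ((j, mn.1, mn.2) : Idx l × ℤ × ℤ) :=
    fun _ _ h => by simpa [Prod.ext_iff] using h
  let term (j : Idx l) (mn : ℤ × ℤ) (p : V l) : V l :=
    q ^ (mn.2 * m2) • (X (j, m2 + mn.1, n2 + mn.2) * pderiv (j, mn.1, mn.2) p)
  have hterm (j : Idx l) (p : V l) : HasFiniteSupport fun mn => term j mn p :=
    (hasFiniteSupport_pderiv_comp (hinj j) p).subset fun mn hmn h =>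
      hmn (by simp only [term, h, mul_zero, smul_zero])
  have hinner (j : Idx l) (a b : V l) : ∑ᶠ mn, term j mn (a * b) =
      a * ∑ᶠ mn, term j mn b + b * ∑ᶠ mn, term j mn a :=
    finsum_leibniz (f := term j) (fun _ => smul_X_mul_pderiv_mul _ _ _) (hterm j) a b
  exact finsum_leibniz (f := fun j p => ∑ᶠ mn, term j mn p) hinner (fun _ => Set.toFinite _) a b

theorem e11Derivation_X (i : Idx l) (m1 n1 : ℤ) :
    e11Derivation l q m2 n2 (X (i, m1, n1)) = q ^ (n1 * m2) • X (i, m2 + m1, n2 + n1) := by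
  classical
  unfold e11Derivation
  rw [finsum_eq_single _ i, finsum_eq_single _ (m1, n1)]
  · simp
  · intro mn hmn
    rw [pderiv_X, Pi.single_eq_of_ne' (by simpa [Prod.ext_iff] using hmn), mul_zero, smul_zero]
  · intro j hj
    refine finsum_eq_zero_of_forall_eq_zero fun mn => ?_
    rw [pderiv_X, Pi.single_eq_of_ne' (by simp [hj]), mul_zero, smul_zero]

end e11Derivation

theorem stmt5_general (l : ℕ) (q μ : ℂ)
    (i : Idx l) (m1 n1 m2 n2 : ℤ) :
    oComm (eLow l i m1 n1) (e11 l q μ m2 n2) = fun p =>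
      q ^ (n1 * m2) • eLow l i (m1 + m2) (n1 + n2) p := by
  funext p
  simp only [oComm, eLow, e11_apply, e11Derivation_mul, e11Derivation_X]
  rw [add_comm m1, add_comm n1, mul_sub, mul_smul_comm, mul_smul_comm, mul_comm p]
  abel

theorem stmt5 (l : ℕ) (hl : 2 ≤ l) (q μ : ℂ) (hq : q ≠ 0)
    (i : Idx l) (m1 n1 m2 n2 : ℤ) :
    oComm (eLow l i m1 n1) (e11 l q μ m2 n2) = fun p =>
      q ^ (n1 * m2) • eLow l i (m1 + m2) (n1 + n2) p :=
  stmt5_general l q μ i m1 n1 m2 n2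
end

section
/- Define e_{1i}(m1,n1) = q^{−m1 n1} μ ∂/∂x_i(−m1,−n1) − Σ_{j=2}^l Σ_{(m,n),(m',n')} q^{n1 m' + n m1 + n m'} x_j(m1+m+m', n1+n+n') ∂/∂x_j(m,n) ∂/∂x_i(m',n') for 2 ≤ i ≤ l. Then for all 2 ≤ i ≤ l and m1,n1,m2,n2 ∈ Z: [x_i(m1,n1)·, e_{1i}(m2,n2)] = −q^{n2 m1} e_{11}(m1+m2, n1+n2) + q^{n1 m2} e_{ii}(m1+m2, n1+n2), where e_{11}(m,n) = μ δ_{(m,n),(0,0)} − Σ_{j=2}^l Σ q^{n' m} x_j(m+m', n+n') ∂/∂x_j(m',n') and e_{ii}(m,n) = Σ q^{m' n} x_i(m+m', n+n') ∂/∂x_i(m',n'). -/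
open MvPolynomial

/-!
Multiplication by `x = x_i(m1,n1)` commutes with all multiplication operators, so the commutator
only sees `[x, ∂_y] = -δ_{x,y}`. The first-order term of `e_{1i}(m2,n2)` thus yields the `μ δ` part
of `e_{11}`, and by the Leibniz rule each second-order term `∂_{x_j(m,n)} ∂_{x_i(m',n')}` yields
the two ways of hitting `x`: `x_j(m,n) = x` gives `e_{ii}`, and `(m',n') = (m1,n1)` gives the sum
part of `e_{11}`. Applied to a fixed `p`, all sums are finite sums over any finite set of indices
`(m,n)` containing `(m1,n1)` and those of the variables of `p`.
-/

namespace MvPolynomial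

variable {σ R : Type*} [CommSemiring R]

theorem pderiv_pderiv_comm (a b : σ) (p : MvPolynomial σ R) :
    pderiv a (pderiv b p) = pderiv b (pderiv a p) := by
  classical
  induction p using MvPolynomial.induction_on with
  | C c => simp
  | add p q hp hq => simp only [map_add, hp, hq]
  | mul_X p n hp =>
    simp only [pderiv_mul, map_add, hp, pderiv_X, Pi.single_apply, apply_ite (pderiv _),
      pderiv_one, map_zero, ite_self, mul_zero, add_zero]
    ring

theorem pderiv_pderiv_eq_zero_of_notMem_vars {a : σ} {p : MvPolynomial σ R} (h : a ∉ p.vars)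
    (b : σ) : pderiv a (pderiv b p) = 0 := by
  rw [pderiv_pderiv_comm, pderiv_eq_zero_of_notMem_vars h, map_zero]

variable [DecidableEq σ]

theorem pderiv_X_mul (x a : σ) (p : MvPolynomial σ R) :
    pderiv a (X x * p) = X x * pderiv a p + if x = a then p else 0 := by
  rw [pderiv_mul, pderiv_X, add_comm]
  by_cases h : x = a <;> simp [h]

theorem pderiv_pderiv_X_mul (x a b : σ) (p : MvPolynomial σ R) :
    pderiv a (pderiv b (X x * p)) =
      X x * pderiv a (pderiv b p) + (if x = a then pderiv b p else 0)
        + if x = b then pderiv a p else 0 := by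
  rw [pderiv_X_mul, map_add, pderiv_X_mul, apply_ite (pderiv a), map_zero, add_right_comm]

end MvPolynomial

instance (l : ℕ) : Fintype (Idx l) := Fintype.subtype (Finset.Icc 2 l) fun _ => Finset.mem_Icc

section LocallyFinite

variable {l : ℕ} {p : V l} {S : Finset (ℤ × ℤ)}

theorem snd_mem_of_mem_vars_X_mul (hS : ∀ v ∈ p.vars, v.2 ∈ S) {x : Idx l × ℤ × ℤ}
    (hx : x.2 ∈ S) : ∀ v ∈ (X x * p).vars, v.2 ∈ S := by
  intro v hv
  rcases Finset.mem_union.1 (vars_mul _ _ hv) with h | h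
  · rw [vars_X, Finset.mem_singleton] at h
    rwa [h]
  · exact hS v h

theorem finsum_smul_X_mul_pderiv_eq_sum (hS : ∀ v ∈ p.vars, v.2 ∈ S) (j : Idx l)
    (c : ℤ × ℤ → ℂ) (w : ℤ × ℤ → Idx l × ℤ × ℤ) :
    ∑ᶠ a : ℤ × ℤ, c a • (X (w a) * pderiv (j, a.1, a.2) p) =
      ∑ a ∈ S, c a • (X (w a) * pderiv (j, a.1, a.2) p) := by
  refine finsum_eq_sum_of_support_subset _ fun a ha => ?_
  by_contra h
  rw [Function.mem_support, pderiv_eq_zero_of_notMem_vars fun hv => h (hS _ hv), mul_zero,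
    smul_zero] at ha
  exact ha rfl

theorem finsum_smul_X_mul_pderiv_pderiv_eq_sum (hS : ∀ v ∈ p.vars, v.2 ∈ S) (i j : Idx l)
    (c : (ℤ × ℤ) × (ℤ × ℤ) → ℂ) (w : (ℤ × ℤ) × (ℤ × ℤ) → Idx l × ℤ × ℤ) :
    ∑ᶠ ab : (ℤ × ℤ) × (ℤ × ℤ),
        c ab • (X (w ab) * pderiv (j, ab.1.1, ab.1.2) (pderiv (i, ab.2.1, ab.2.2) p)) =
      ∑ a ∈ S, ∑ b ∈ S,
        c (a, b) • (X (w (a, b)) * pderiv (j, a.1, a.2) (pderiv (i, b.1, b.2) p)) := by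
  refine (finsum_eq_sum_of_support_subset _ fun ab hab => ?_).trans (Finset.sum_product S S _)
  rw [Finset.coe_product, Set.mem_prod]
  by_contra h
  rw [Function.mem_support] at hab
  rcases not_and_or.1 h with ha | hb
  · rw [pderiv_pderiv_eq_zero_of_notMem_vars fun hv => ha (hS _ hv), mul_zero, smul_zero] at hab
    exact hab rfl
  · rw [pderiv_eq_zero_of_notMem_vars fun hv => hb (hS _ hv), map_zero, mul_zero,
      smul_zero] at hab
    exact hab rfl

end LocallyFinite

theorem smul_X_mul_pderiv_pderiv_X_mul {l : ℕ} (c : ℂ) (y : Idx l × ℤ × ℤ) (i j : Idx l)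
    (m n : ℤ) (a b : ℤ × ℤ) (p : V l) :
    c • (X y * pderiv (j, a.1, a.2) (pderiv (i, b.1, b.2) (X (i, m, n) * p))) =
      X (i, m, n) * (c • (X y * pderiv (j, a.1, a.2) (pderiv (i, b.1, b.2) p)))
        + (if i = j then if (m, n) = a then c • (X y * pderiv (i, b.1, b.2) p) else 0 else 0)
        + if (m, n) = b then c • (X y * pderiv (j, a.1, a.2) p) else 0 := by
  have ha : (i, m, n) = (j, a.1, a.2) ↔ i = j ∧ (m, n) = a := by simp [Prod.ext_iff]
  have hb : (i, m, n) = (i, b.1, b.2) ↔ (m, n) = b := by simp [Prod.ext_iff]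
  rw [pderiv_pderiv_X_mul]
  simp only [ha, hb, ite_and]
  split_ifs <;> simp only [smul_eq_C_mul, add_zero] <;> ring

theorem sum_smul_X_mul_pderiv_pderiv_X_mul {l : ℕ} (S : Finset (ℤ × ℤ)) {i : Idx l} {m n : ℤ}
    (hmn : (m, n) ∈ S) (c : ℤ × ℤ → ℤ × ℤ → ℂ)
    (w : Idx l → ℤ × ℤ → ℤ × ℤ → Idx l × ℤ × ℤ) (p : V l) :
    ∑ j, ∑ a ∈ S, ∑ b ∈ S, c a b •
        (X (w j a b) * pderiv (j, a.1, a.2) (pderiv (i, b.1, b.2) (X (i, m, n) * p))) =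
      X (i, m, n) * ∑ j, ∑ a ∈ S, ∑ b ∈ S, c a b •
          (X (w j a b) * pderiv (j, a.1, a.2) (pderiv (i, b.1, b.2) p))
        + ∑ b ∈ S, c (m, n) b • (X (w i (m, n) b) * pderiv (i, b.1, b.2) p)
        + ∑ j, ∑ a ∈ S, c a (m, n) • (X (w j a (m, n)) * pderiv (j, a.1, a.2) p) := by
  simp only [smul_X_mul_pderiv_pderiv_X_mul, Finset.sum_add_distrib, ← Finset.mul_sum,
    Finset.sum_ite_irrel, Finset.sum_const_zero, Finset.sum_ite_eq, Finset.mem_univ, hmn, if_true]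

theorem zpow_smul_ite_eq {l : ℕ} (q μ : ℂ) (i : Idx l) (m1 n1 m2 n2 : ℤ) (p : V l) :
    q ^ (-(m2 * n2)) • μ • (if (i, m1, n1) = (i, -m2, -n2) then p else 0) =
      q ^ (n2 * m1) • (if (m1 + m2, n1 + n2) = (0, 0) then μ else 0) • p := by
  by_cases h : m1 = -m2 ∧ n1 = -n2
  · obtain ⟨rfl, rfl⟩ := h
    simp [mul_comm]
  · have h' : ¬(m1 + m2 = 0 ∧ n1 + n2 = 0) := by omega
    simp [h, h']

theorem oComm_eLow_eUp_apply_eq_sum {l : ℕ} {q μ : ℂ} {i : Idx l} {m1 n1 m2 n2 : ℤ} {p : V l}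
    {S : Finset (ℤ × ℤ)} (hS : ∀ v ∈ p.vars, v.2 ∈ S) (hmn : (m1, n1) ∈ S) :
    oComm (eLow l i m1 n1) (eUp l q μ i m2 n2) p =
      -(q ^ (n2 * m1) • (if (m1 + m2, n1 + n2) = (0, 0) then μ else 0) • p)
        + ∑ b ∈ S, q ^ (n2 * b.1 + n1 * m2 + n1 * b.1) •
            (X (i, m2 + m1 + b.1, n2 + n1 + b.2) * pderiv (i, b.1, b.2) p)
        + ∑ j, ∑ a ∈ S, q ^ (n2 * m1 + a.2 * m2 + a.2 * m1) •
            (X (j, m2 + a.1 + m1, n2 + a.2 + n1) * pderiv (j, a.1, a.2) p) := by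
  simp only [oComm, eLow, eUp, finsum_eq_sum_of_fintype,
    finsum_smul_X_mul_pderiv_pderiv_eq_sum hS,
    finsum_smul_X_mul_pderiv_pderiv_eq_sum (snd_mem_of_mem_vars_X_mul (x := (i, m1, n1)) hS hmn)]
  rw [sum_smul_X_mul_pderiv_pderiv_X_mul S hmn, pderiv_X_mul, smul_add, smul_add,
    zpow_smul_ite_eq]
  simp only [mul_sub, mul_smul_comm]
  abel

theorem stmt6_general (l : ℕ) (q μ : ℂ) (hq : q ≠ 0)
    (i : Idx l) (m1 n1 m2 n2 : ℤ) :
    oComm (eLow l i m1 n1) (eUp l q μ i m2 n2) = fun p =>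
      -(q ^ (n2 * m1) • e11 l q μ (m1 + m2) (n1 + n2) p)
      + q ^ (n1 * m2) • eGen l q i i (m1 + m2) (n1 + n2) p := by
  funext p
  set S := insert (m1, n1) (p.vars.image Prod.snd)
  have hS : ∀ v ∈ p.vars, v.2 ∈ S := fun v hv =>
    Finset.mem_insert_of_mem (Finset.mem_image_of_mem _ hv)
  have h_eii : ∀ b : ℤ × ℤ, q ^ (n2 * b.1 + n1 * m2 + n1 * b.1) •
      (X (i, m2 + m1 + b.1, n2 + n1 + b.2) * pderiv (i, b.1, b.2) p) =
      q ^ (n1 * m2) • q ^ (b.1 * (n1 + n2)) •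
        (X (i, m1 + m2 + b.1, n1 + n2 + b.2) * pderiv (i, b.1, b.2) p) := by
    intro b
    rw [smul_smul, ← zpow_add₀ hq]
    ring_nf
  have h_e11 : ∀ (j : Idx l) (a : ℤ × ℤ), q ^ (n2 * m1 + a.2 * m2 + a.2 * m1) •
      (X (j, m2 + a.1 + m1, n2 + a.2 + n1) * pderiv (j, a.1, a.2) p) =
      q ^ (n2 * m1) • q ^ (a.2 * (m1 + m2)) •
        (X (j, m1 + m2 + a.1, n1 + n2 + a.2) * pderiv (j, a.1, a.2) p) := by
    intro j a
    rw [smul_smul, ← zpow_add₀ hq]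
    ring_nf
  rw [oComm_eLow_eUp_apply_eq_sum hS (Finset.mem_insert_self _ _)]
  simp only [e11, eGen, finsum_eq_sum_of_fintype, finsum_smul_X_mul_pderiv_eq_sum hS, h_eii, h_e11,
    ← Finset.smul_sum, smul_sub]
  abel

theorem stmt6 (l : ℕ) (hl : 2 ≤ l) (q μ : ℂ) (hq : q ≠ 0)
    (i : Idx l) (m1 n1 m2 n2 : ℤ) :
    oComm (eLow l i m1 n1) (eUp l q μ i m2 n2) = fun p =>
      -(q ^ (n2 * m1) • e11 l q μ (m1 + m2) (n1 + n2) p)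
      + q ^ (n1 * m2) • eGen l q i i (m1 + m2) (n1 + n2) p :=
  stmt6_general l q μ hq i m1 n1 m2 n2
end

section
/- For all 2 ≤ i ≠ j ≤ l and m1,n1,m2,n2 ∈ Z, [e_{1i}(m1,n1), e_{1j}(m2,n2)] = 0. -/
open MvPolynomial

/-!
Let `E(t)` be the derivation of `V` with `E(t) x_k(a) = q^{a₂ t₁} x_k(t + a)`, so that
`e₁₁(t) = μ δ_{t,0} − E(t)` and `e_{1i}(s) = Σ_b q^{s₂ b₁} e₁₁(s + b) ∂_{i,b}`. Comparing
derivations on generators gives `[∂_{i,b}, E(t)] = q^{(b−t)₂ t₁} ∂_{i,b−t}` and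
`[E(t), E(t')] = (q^{t₁ t'₂} − q^{t₂ t'₁}) E(t + t')`; in `[e₁₁(t), e₁₁(t')]` the central term drops
out because `t + t' = 0` makes the two exponents equal. Moving each `∂_{i,b}` to the right turns
`e_{1i}(s) e_{1j}(s')` into a double sum over `(b, b')` of terms
`e₁₁(s+b) e₁₁(s'+b') ∂_{i,b} ∂_{j,b'}` and `e₁₁(s+b+s'+b') ∂_{i,b} ∂_{j,b'}`, and by the commutation
relation of the `e₁₁` these summands are symmetric under `(i, s, b) ↔ (j, s', b')`. All sums are
finite on a given polynomial `p`, because `∂_v p = 0` unless `x_v` occurs in `p`.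
-/

theorem finsum_uncurry {α β M : Type*} [AddCommMonoid M] (f : α → β → M)
    (hf : (fun x : α × β => f x.1 x.2).HasFiniteSupport) :
    ∑ᶠ (a) (b), f a b = ∑ᶠ x : α × β, f x.1 x.2 :=
  (finsum_curry _ hf).symm

namespace MvPolynomial

section CommSemiring

variable {R σ : Type*} [CommSemiring R]

theorem hasFiniteSupport_of_pderiv {α M : Type*} [Zero M] {f : α → M} (p : MvPolynomial σ R)
    {g : α → σ} (hg : g.Injective) (hf : ∀ x, pderiv (g x) p = 0 → f x = 0) :
    f.HasFiniteSupport :=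
  (p.vars.finite_toSet.preimage hg.injOn).subset fun x hx =>
    by_contra fun h => hx (hf x (pderiv_eq_zero_of_notMem_vars h))

theorem derivation_eq_finsum_pderiv (D : Derivation R (MvPolynomial σ R) (MvPolynomial σ R))
    (p : MvPolynomial σ R) : D p = ∑ᶠ v, pderiv v p * D (X v) := by
  classical
  rw [finsum_eq_sum_of_support_subset _ (s := p.vars) fun v hv => by
    by_contra h; exact hv (by simp only [pderiv_eq_zero_of_notMem_vars h, zero_mul])]
  have hsum : ∀ x,
      (∑ v ∈ p.vars, D (X v) • pderiv v) x = ∑ v ∈ p.vars, D (X v) * pderiv v x :=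
    fun x => by
      rw [← Derivation.coeFnAddMonoidHom_apply, map_sum, Finset.sum_apply]
      rfl
  simp_rw [mul_comm (pderiv _ p), ← hsum]
  refine derivation_eq_of_forall_mem_vars fun w hw => ?_
  simp [hsum, pderiv_X, Pi.single_apply, hw]

end CommSemiring

variable {R σ : Type*} [CommRing R]

theorem pderiv_comm (u w : σ) (p : MvPolynomial σ R) :
    pderiv u (pderiv w p) = pderiv w (pderiv u p) := by
  classical
  suffices h :
      ⁅pderiv u, pderiv w⁆ = (0 : Derivation R (MvPolynomial σ R) (MvPolynomial σ R)) by
    rw [← sub_eq_zero, ← Derivation.commutator_apply, h, Derivation.zero_apply]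
  refine derivation_ext fun v => ?_
  simp only [Derivation.commutator_apply, pderiv_X, Pi.single_apply]
  split_ifs <;> simp

theorem hasFiniteSupport_of_pderiv_pderiv {α M : Type*} [Zero M] {f : α → M}
    (p : MvPolynomial σ R) {g : α → σ × σ} (hg : g.Injective)
    (hf : ∀ x, pderiv (g x).1 (pderiv (g x).2 p) = 0 → f x = 0) : f.HasFiniteSupport := by
  refine ((p.vars.finite_toSet.prod p.vars.finite_toSet).preimage hg.injOn).subset fun x hx => ?_
  refine ⟨by_contra fun h => hx (hf x ?_), by_contra fun h => hx (hf x ?_)⟩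
  · rw [pderiv_comm, pderiv_eq_zero_of_notMem_vars h, map_zero]
  · rw [pderiv_eq_zero_of_notMem_vars h, map_zero]

end MvPolynomial

open MvPolynomial

namespace QToroidal

variable {l : ℕ}

noncomputable def eulerShift (l : ℕ) (q : ℂ) (t : ℤ × ℤ) : Derivation ℂ (V l) (V l) :=
  mkDerivation ℂ fun v => q ^ (v.2.2 * t.1) • X (v.1, t + v.2)

theorem eulerShift_X (q : ℂ) (t : ℤ × ℤ) (v : Idx l × ℤ × ℤ) :
    eulerShift l q t (X v) = q ^ (v.2.2 * t.1) • X (v.1, t + v.2) :=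
  mkDerivation_X _ _ _

theorem pderiv_lie_eulerShift (q : ℂ) (i : Idx l) (b t : ℤ × ℤ) :
    ⁅(pderiv (i, b) : Derivation ℂ (V l) (V l)), eulerShift l q t⁆ =
      q ^ ((b - t).2 * t.1) • pderiv (i, b - t) := by
  classical
  refine derivation_ext fun ⟨h, c⟩ => ?_
  have hconst : eulerShift l q t (pderiv (i, b) (X (h, c))) = 0 := by
    rw [pderiv_X, Pi.single_apply]
    split_ifs <;> simp
  rw [Derivation.commutator_apply, hconst, sub_zero, eulerShift_X, Derivation.map_smul,
    Derivation.smul_apply, pderiv_X, pderiv_X, Pi.single_apply, Pi.single_apply]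
  simp only [Prod.mk.injEq, eq_sub_iff_add_eq']
  split_ifs with hc
  · obtain ⟨rfl, rfl⟩ := hc
    simp
  · simp

theorem eulerShift_lie {q : ℂ} (hq : q ≠ 0) (t t' : ℤ × ℤ) :
    ⁅eulerShift l q t, eulerShift l q t'⁆ =
      (q ^ (t.1 * t'.2) - q ^ (t.2 * t'.1)) • eulerShift l q (t + t') := by
  refine derivation_ext fun ⟨h, c⟩ => ?_
  simp only [Derivation.commutator_apply, Derivation.smul_apply, eulerShift_X,
    Derivation.map_smul, smul_smul, ← zpow_add₀ hq]
  rw [add_left_comm t' t c, ← add_assoc, ← sub_smul, sub_mul, ← zpow_add₀ hq,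
    ← zpow_add₀ hq]
  congr 3 <;> simp only [Prod.fst_add, Prod.snd_add] <;> ring

theorem eulerShift_apply (q : ℂ) (t : ℤ × ℤ) (p : V l) :
    eulerShift l q t p = ∑ᶠ (j : Idx l) (mn : ℤ × ℤ),
      q ^ (mn.2 * t.1) • (X (j, t.1 + mn.1, t.2 + mn.2) * pderiv (j, mn.1, mn.2) p) := by
  have hfin :
      (fun v : Idx l × ℤ × ℤ => pderiv v p * eulerShift l q t (X v)).HasFiniteSupport :=
    hasFiniteSupport_of_pderiv p Function.injective_id fun v (hv : pderiv v p = 0) => by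
      simp only [hv, zero_mul]
  rw [derivation_eq_finsum_pderiv, finsum_curry _ hfin]
  refine finsum_congr fun j => finsum_congr fun mn => ?_
  rw [eulerShift_X, mul_smul_comm, mul_comm (pderiv _ _)]
  rfl

noncomputable def e11End (l : ℕ) (q μ : ℂ) (t : ℤ × ℤ) : Module.End ℂ (V l) :=
  (if t = 0 then μ else 0) • 1 - (eulerShift l q t : Module.End ℂ (V l))

theorem e11End_apply (q μ : ℂ) (t : ℤ × ℤ) (p : V l) :
    e11End l q μ t p = (if t = 0 then μ else 0) • p - eulerShift l q t p := rfl

theorem coe_e11End (q μ : ℂ) (t : ℤ × ℤ) : ⇑(e11End l q μ t) = e11 l q μ t.1 t.2 := by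
  funext p
  rw [e11End_apply, e11, eulerShift_apply, Prod.mk_zero_zero, Prod.mk.eta]

theorem pderiv_e11End (q μ : ℂ) (i : Idx l) (b t : ℤ × ℤ) (p : V l) :
    pderiv (i, b) (e11End l q μ t p) =
      e11End l q μ t (pderiv (i, b) p) - q ^ ((b - t).2 * t.1) • pderiv (i, b - t) p := by
  have h := congr($(pderiv_lie_eulerShift q i b t) p)
  rw [Derivation.commutator_apply, Derivation.smul_apply] at h
  rw [e11End_apply, e11End_apply, map_sub, Derivation.map_smul, ← h]
  abel

theorem e11End_commutator {q : ℂ} (hq : q ≠ 0) (μ : ℂ) (t t' : ℤ × ℤ) (p : V l) :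
    e11End l q μ t (e11End l q μ t' p) - e11End l q μ t' (e11End l q μ t p) =
      (q ^ (t.2 * t'.1) - q ^ (t.1 * t'.2)) • e11End l q μ (t + t') p := by
  have h := congr($(eulerShift_lie (l := l) hq t t') p)
  rw [Derivation.commutator_apply, Derivation.smul_apply] at h
  have hcentral : (q ^ (t.2 * t'.1) - q ^ (t.1 * t'.2)) * (if t + t' = 0 then μ else 0) = 0 := by
    split_ifs with ht
    · rw [add_eq_zero_iff_eq_neg'.mp ht]
      simp [mul_comm]
    · rw [mul_zero]
  simp only [e11End_apply, map_sub, map_smul, smul_sub, smul_smul, hcentral, zero_smul]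
  rw [← neg_sub (q ^ (t.1 * t'.2)), neg_smul, ← h]
  module

theorem finsum_smul_eulerShift_pderiv {q : ℂ} (hq : q ≠ 0) (i : Idx l) (m n : ℤ) (p : V l) :
    ∑ᶠ b : ℤ × ℤ, q ^ (n * b.1) • eulerShift l q ((m, n) + b) (pderiv (i, b) p) =
      ∑ᶠ (j : Idx l) (mm : (ℤ × ℤ) × (ℤ × ℤ)),
        q ^ (n * mm.2.1 + mm.1.2 * m + mm.1.2 * mm.2.1) •
          (X (j, m + mm.1.1 + mm.2.1, n + mm.1.2 + mm.2.2) *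
            pderiv (j, mm.1.1, mm.1.2) (pderiv (i, mm.2.1, mm.2.2) p)) := by
  have hE : ∀ b : ℤ × ℤ, q ^ (n * b.1) • eulerShift l q ((m, n) + b) (pderiv (i, b) p) =
      ∑ᶠ v, q ^ (n * b.1) •
        (pderiv v (pderiv (i, b) p) * eulerShift l q ((m, n) + b) (X v)) :=
    fun b => by
      rw [derivation_eq_finsum_pderiv, smul_finsum' _
        (hasFiniteSupport_of_pderiv (pderiv (i, b) p) Function.injective_id
          fun v (hv : pderiv v _ = 0) => by simp only [hv, zero_mul])]
  rw [finsum_congr hE, finsum_uncurry _ ?finR, finsum_uncurry _ ?finL]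
  · refine finsum_eq_of_bijective _ ((Equiv.prodComm _ _).trans (Equiv.prodAssoc _ _ _)).bijective
      fun x => ?_
    obtain ⟨b, j, a⟩ := x
    simp only [Equiv.trans_apply, Equiv.prodComm_apply, Prod.swap_prod_mk, Equiv.prodAssoc_apply]
    rw [eulerShift_X, mul_smul_comm, smul_smul, ← zpow_add₀ hq, mul_comm (pderiv _ _)]
    congr 1
    · congr 1
      simp only [Prod.fst_add]
      ring
    · congr 3
      ext <;> simp only [Prod.fst_add, Prod.snd_add] <;> ring
  case finR =>
    refine hasFiniteSupport_of_pderiv_pderiv p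
      (g := fun x : (ℤ × ℤ) × (Idx l × ℤ × ℤ) => (x.2, (i, x.1)))
      (fun x y h => ?_) fun x hx => ?_
    · simp only [Prod.mk.injEq, true_and] at h
      exact Prod.ext h.2 h.1
    · simp only [show pderiv x.2 (pderiv (i, x.1) p) = 0 from hx, zero_mul, smul_zero]
  case finL =>
    refine hasFiniteSupport_of_pderiv_pderiv p
      (g := fun x : Idx l × ((ℤ × ℤ) × (ℤ × ℤ)) => ((x.1, x.2.1), (i, x.2.2)))
      (fun x y h => ?_) fun x hx => ?_
    · simp only [Prod.mk.injEq, true_and] at h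
      exact Prod.ext h.1.1 (Prod.ext h.1.2 h.2)
    · simp only [Prod.mk.eta, show pderiv (x.1, x.2.1) (pderiv (i, x.2.2) p) = 0 from hx, mul_zero,
        smul_zero]

theorem eUp_eq_finsum {q : ℂ} (hq : q ≠ 0) (μ : ℂ) (i : Idx l) (m n : ℤ) (p : V l) :
    eUp l q μ i m n p =
      ∑ᶠ b : ℤ × ℤ,
        q ^ (n * b.1) • e11 l q μ (m + b.1) (n + b.2) (pderiv (i, b) p) := by
  have he11 : ∀ b : ℤ × ℤ, e11 l q μ (m + b.1) (n + b.2) = e11End l q μ ((m, n) + b) :=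
    fun b => (coe_e11End q μ ((m, n) + b)).symm
  simp_rw [he11, e11End_apply, smul_sub]
  rw [finsum_sub_distrib
    (hasFiniteSupport_of_pderiv p (Prod.mk_right_injective i) fun b hb => by
      simp only [hb, smul_zero])
    (hasFiniteSupport_of_pderiv p (Prod.mk_right_injective i) fun b hb => by
      simp only [hb, map_zero, smul_zero]), eUp]
  congr 1
  · rw [finsum_eq_single _ (-(m, n)) fun b hb => by
      rw [if_neg fun h => hb (eq_neg_of_add_eq_zero_right h), zero_smul, smul_zero]]
    rw [add_neg_cancel, if_pos rfl, Prod.neg_mk, mul_neg, mul_comm]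
  · exact (finsum_smul_eulerShift_pderiv hq i m n p).symm

theorem hasFiniteSupport_of_pderiv_pair {M : Type*} [Zero M]
    {f : (ℤ × ℤ) × (ℤ × ℤ) → M} (i j : Idx l) (p : V l)
    (hf : ∀ x, pderiv (i, x.1) (pderiv (j, x.2) p) = 0 → f x = 0) :
    f.HasFiniteSupport :=
  hasFiniteSupport_of_pderiv_pderiv p (g := fun x => ((i, x.1), (j, x.2)))
    (fun x y h => by simp_all [Prod.ext_iff]) hf

theorem eUp_comp_eUp_eq_finsum_finsum {q : ℂ} (hq : q ≠ 0) (μ : ℂ) (i j : Idx l)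
    (s s' : ℤ × ℤ) (p : V l) :
    eUp l q μ i s.1 s.2 (eUp l q μ j s'.1 s'.2 p) =
      ∑ᶠ (b) (b'), q ^ (s.2 * b.1) • e11End l q μ (s + b) (pderiv (i, b)
        (q ^ (s'.2 * b'.1) • e11End l q μ (s' + b') (pderiv (j, b') p))) := by
  have he11 (t b : ℤ × ℤ) : e11 l q μ (t.1 + b.1) (t.2 + b.2) = e11End l q μ (t + b) :=
    (coe_e11End q μ (t + b)).symm
  have hfin : (fun b' =>
      q ^ (s'.2 * b'.1) • e11End l q μ (s' + b') (pderiv (j, b') p)).HasFiniteSupport :=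
    hasFiniteSupport_of_pderiv p (Prod.mk_right_injective j) fun b' hb' => by
      simp only [hb', map_zero, smul_zero]
  rw [eUp_eq_finsum hq μ j, eUp_eq_finsum hq]
  simp_rw [he11]
  refine finsum_congr fun b => ?_
  have hfin' := hfin.fun_comp (map_zero (pderiv (i, b) : Derivation ℂ (V l) (V l)))
  rw [map_finsum _ hfin, map_finsum _ hfin',
    smul_finsum' _ (hfin'.fun_comp (map_zero (e11End l q μ (s + b))))]

noncomputable def normalTerm (l : ℕ) (q μ : ℂ) (i j : Idx l) (s s' : ℤ × ℤ) (p : V l)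
    (b b' : ℤ × ℤ) : V l :=
  (q ^ (s.2 * b.1) * q ^ (s'.2 * b'.1)) •
      e11End l q μ (s + b) (e11End l q μ (s' + b') (pderiv (i, b) (pderiv (j, b') p))) -
    (q ^ (s.2 * (b + (s' + b')).1) * q ^ (s'.2 * b'.1) * q ^ (b.2 * (s' + b').1)) •
      e11End l q μ (s + b + (s' + b')) (pderiv (i, b) (pderiv (j, b') p))

theorem eUp_comp_eUp {q : ℂ} (hq : q ≠ 0) (μ : ℂ) (i j : Idx l) (s s' : ℤ × ℤ)
    (p : V l) :
    eUp l q μ i s.1 s.2 (eUp l q μ j s'.1 s'.2 p) =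
      ∑ᶠ x : (ℤ × ℤ) × (ℤ × ℤ), normalTerm l q μ i j s s' p x.1 x.2 := by
  -- the correction term of `pderiv_e11End` sits at `∂_{i, b - (s' + b')}`; `e` reindexes it
  let e : (ℤ × ℤ) × (ℤ × ℤ) ≃ (ℤ × ℤ) × (ℤ × ℤ) :=
    { toFun x := (x.1 + (s' + x.2), x.2)
      invFun x := (x.1 - (s' + x.2), x.2)
      left_inv x := by simp
      right_inv x := by simp }
  set A : (ℤ × ℤ) × (ℤ × ℤ) → V l := fun x =>
    (q ^ (s.2 * x.1.1) * q ^ (s'.2 * x.2.1)) •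
      e11End l q μ (s + x.1) (e11End l q μ (s' + x.2) (pderiv (i, x.1) (pderiv (j, x.2) p)))
  set C : (ℤ × ℤ) × (ℤ × ℤ) → V l := fun x =>
    (q ^ (s.2 * (x.1 + (s' + x.2)).1) * q ^ (s'.2 * x.2.1) * q ^ (x.1.2 * (s' + x.2).1)) •
      e11End l q μ (s + x.1 + (s' + x.2)) (pderiv (i, x.1) (pderiv (j, x.2) p))
  have hA : A.HasFiniteSupport := hasFiniteSupport_of_pderiv_pair i j p fun x hx => by
    simp only [A, hx, map_zero, smul_zero]
  have hC : C.HasFiniteSupport := hasFiniteSupport_of_pderiv_pair i j p fun x hx => by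
    simp only [C, hx, map_zero, smul_zero]
  have hCe : (fun x => C (e.symm x)).HasFiniteSupport :=
    hC.comp_of_injective (g := e.symm) e.symm.injective
  have hterm (b b' : ℤ × ℤ) : q ^ (s.2 * b.1) • e11End l q μ (s + b) (pderiv (i, b)
      (q ^ (s'.2 * b'.1) • e11End l q μ (s' + b') (pderiv (j, b') p))) =
      A (b, b') - C (e.symm (b, b')) := by
    rw [Derivation.map_smul, pderiv_e11End, map_smul, map_sub, map_smul]
    simp only [A, C, e, Equiv.coe_fn_symm_mk, add_assoc, sub_add_cancel, smul_sub, smul_smul,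
      mul_assoc]
  rw [eUp_comp_eUp_eq_finsum_finsum hq, finsum_congr fun b => finsum_congr fun b' => hterm b b',
    finsum_uncurry _ (hA.sub hCe), finsum_sub_distrib hA hCe, finsum_comp_equiv e.symm (f := C),
    ← finsum_sub_distrib hA hC]
  rfl

theorem normalTerm_swap {q : ℂ} (hq : q ≠ 0) (μ : ℂ) (i j : Idx l) (s s' : ℤ × ℤ)
    (p : V l) (b b' : ℤ × ℤ) :
    normalTerm l q μ i j s s' p b b' = normalTerm l q μ j i s' s p b' b := by
  set t := s + b
  set t' := s' + b'
  have hκ : q ^ (s.2 * (b + t').1) * q ^ (s'.2 * b'.1) * q ^ (b.2 * t'.1) =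
      q ^ (s.2 * b.1) * q ^ (s'.2 * b'.1) * q ^ (t.2 * t'.1) := by
    simp only [← zpow_add₀ hq, t, t', Prod.fst_add, Prod.snd_add]
    ring_nf
  have hκ' : q ^ (s'.2 * (b' + t).1) * q ^ (s.2 * b.1) * q ^ (b'.2 * t.1) =
      q ^ (s.2 * b.1) * q ^ (s'.2 * b'.1) * q ^ (t.1 * t'.2) := by
    simp only [← zpow_add₀ hq, t, t', Prod.fst_add, Prod.snd_add]
    ring_nf
  have hcomm := e11End_commutator hq μ t t' (pderiv (i, b) (pderiv (j, b') p))
  rw [sub_eq_iff_eq_add'] at hcomm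
  rw [normalTerm, normalTerm, hκ, hκ', pderiv_comm (j, b'), add_comm t' t, hcomm]
  module

theorem eUp_comp_eUp_comm {q : ℂ} (hq : q ≠ 0) (μ : ℂ) (i j : Idx l) (s s' : ℤ × ℤ)
    (p : V l) :
    eUp l q μ i s.1 s.2 (eUp l q μ j s'.1 s'.2 p) =
      eUp l q μ j s'.1 s'.2 (eUp l q μ i s.1 s.2 p) := by
  rw [eUp_comp_eUp hq, eUp_comp_eUp hq,
    ← finsum_comp_equiv (Equiv.prodComm _ _) (f := fun x => normalTerm l q μ j i s' s p x.1 x.2)]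
  exact finsum_congr fun x => normalTerm_swap hq μ i j s s' p x.1 x.2

end QToroidal

open QToroidal in
theorem stmt8_general (l : ℕ) (q μ : ℂ) (hq : q ≠ 0)
    (i j : Idx l) (m1 n1 m2 n2 : ℤ) :
    oComm (eUp l q μ i m1 n1) (eUp l q μ j m2 n2) = fun _ => 0 :=
  funext fun p => sub_eq_zero.mpr (eUp_comp_eUp_comm hq μ i j (m1, n1) (m2, n2) p)

theorem stmt8 (l : ℕ) (hl : 3 ≤ l) (q μ : ℂ) (hq : q ≠ 0)
    (i j : Idx l) (hij : i ≠ j) (m1 n1 m2 n2 : ℤ) :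
    oComm (eUp l q μ i m1 n1) (eUp l q μ j m2 n2) = fun _ => 0 :=
  stmt8_general l q μ hq i j m1 n1 m2 n2
end

section
/- For all 2 ≤ i ≠ j ≤ l and m1,n1,m2,n2 ∈ Z, [e_{ij}(m1,n1), e_{11}(m2,n2)] = 0, and also [e_{ii}(m1,n1), e_{11}(m2,n2)] = 0. -/
open MvPolynomial

/-! Both `e_{ij}(m1,n1)` and `e_{11}(m2,n2) - μ δ` are derivations of `V`, so their commutator is a
derivation and it suffices that it kills every generator `x_k(a,b)`. Only `k = j` matters, and
there both composites give `q ^ (a n1 + b m2 + m2 n1) x_i(m1+m2+a, n1+n2+b)`. -/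

namespace MvPolynomial

section CommSemiring

variable {R σ : Type*} [CommSemiring R]

lemma support_mul_pderiv_subset_vars (C : σ → MvPolynomial σ R) (p : MvPolynomial σ R) :
    Function.support (fun v => C v * pderiv v p) ⊆ p.vars := fun v hv => by
  by_contra h
  exact hv (by simp [pderiv_eq_zero_of_notMem_vars h])

lemma finsum_mul_pderiv_eq_mkDerivation (C : σ → MvPolynomial σ R) (p : MvPolynomial σ R) :
    ∑ᶠ v, C v * pderiv v p = mkDerivation R C p := by
  classical
  set D : Derivation R (MvPolynomial σ R) (MvPolynomial σ R) := ∑ v ∈ p.vars, C v • pderiv v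
  have hD : ∀ f, D f = ∑ v ∈ p.vars, C v * pderiv v f := fun f => by
    rw [← Derivation.coeFnAddMonoidHom_apply, map_sum, Finset.sum_apply]
    rfl
  rw [finsum_eq_sum_of_support_subset _ (support_mul_pderiv_subset_vars C p), ← hD]
  exact derivation_eq_of_forall_mem_vars fun k hk => by
    simp [hD, pderiv_X, Pi.single_apply, hk]

lemma finsum_finsum_mul_pderiv_eq_mkDerivation {ι κ : Type*}
    (C : ι × κ → MvPolynomial (ι × κ) R) (p : MvPolynomial (ι × κ) R) :
    ∑ᶠ (i) (k), C (i, k) * pderiv (i, k) p = mkDerivation R C p := by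
  rw [← finsum_curry _ ((p.vars.finite_toSet).subset (support_mul_pderiv_subset_vars C p)),
    finsum_mul_pderiv_eq_mkDerivation]

end CommSemiring

variable {R σ : Type*} [CommRing R]

lemma mkDerivation_mkDerivation_comm (f g : σ → MvPolynomial σ R)
    (h : ∀ v, mkDerivation R f (g v) = mkDerivation R g (f v)) (p : MvPolynomial σ R) :
    mkDerivation R f (mkDerivation R g p) = mkDerivation R g (mkDerivation R f p) := by
  have hcomm : ⁅mkDerivation R f, mkDerivation R g⁆ = 0 :=
    derivation_ext fun v => by simp [Derivation.commutator_apply, mkDerivation_X, h]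
  simpa [Derivation.commutator_apply, sub_eq_zero] using congrArg (· p) hcomm

end MvPolynomial

noncomputable def eGenOnX (l : ℕ) (q : ℂ) (i j : Idx l) (m1 n1 : ℤ) : Idx l × ℤ × ℤ → V l :=
  fun v => if v.1 = j then q ^ (v.2.1 * n1) • X (i, m1 + v.2.1, n1 + v.2.2) else 0

noncomputable def e11OnX (l : ℕ) (q : ℂ) (m1 n1 : ℤ) : Idx l × ℤ × ℤ → V l :=
  fun v => q ^ (v.2.2 * m1) • X (v.1, m1 + v.2.1, n1 + v.2.2)

lemma eGen_eq_mkDerivation (l : ℕ) (q : ℂ) (i j : Idx l) (m1 n1 : ℤ) :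
    eGen l q i j m1 n1 = mkDerivation ℂ (eGenOnX l q i j m1 n1) := by
  funext p
  rw [← finsum_finsum_mul_pderiv_eq_mkDerivation, finsum_eq_single _ j fun k hk => ?_]
  · simp [eGen, eGenOnX]
  · simp [eGenOnX, hk]

lemma e11_eq_smul_sub_mkDerivation (l : ℕ) (q μ : ℂ) (m1 n1 : ℤ) (p : V l) :
    e11 l q μ m1 n1 p =
      (if (m1, n1) = ((0 : ℤ), (0 : ℤ)) then μ else 0) • p
        - mkDerivation ℂ (e11OnX l q m1 n1) p := by
  simp [e11, e11OnX, ← finsum_finsum_mul_pderiv_eq_mkDerivation]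

lemma mkDerivation_eGenOnX_e11OnX_comm (l : ℕ) (q : ℂ) (hq : q ≠ 0) (i j : Idx l)
    (m1 n1 m2 n2 : ℤ) (p : V l) :
    mkDerivation ℂ (eGenOnX l q i j m1 n1) (mkDerivation ℂ (e11OnX l q m2 n2) p) =
      mkDerivation ℂ (e11OnX l q m2 n2) (mkDerivation ℂ (eGenOnX l q i j m1 n1) p) := by
  refine mkDerivation_mkDerivation_comm _ _ (fun ⟨k, a, b⟩ => ?_) p
  by_cases hk : k = j
  · subst hk
    simp only [eGenOnX, e11OnX, if_true, Derivation.map_smul, mkDerivation_X, smul_smul,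
      ← zpow_add₀ hq]
    ring_nf
  · simp [eGenOnX, e11OnX, hk]

theorem stmt12_general (l : ℕ) (q μ : ℂ) (hq : q ≠ 0)
    (i j : Idx l) (m1 n1 m2 n2 : ℤ) :
    oComm (eGen l q i j m1 n1) (e11 l q μ m2 n2) = (fun _ => 0) ∧
    oComm (eGen l q i i m1 n1) (e11 l q μ m2 n2) = (fun _ => 0) := by
  have h : ∀ a b : Idx l, oComm (eGen l q a b m1 n1) (e11 l q μ m2 n2) = fun _ => 0 :=
    fun a b => funext fun p => by
      simp only [oComm, eGen_eq_mkDerivation, e11_eq_smul_sub_mkDerivation, map_sub,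
        Derivation.map_smul, mkDerivation_eGenOnX_e11OnX_comm l q hq, sub_self]
  exact ⟨h i j, h i i⟩

theorem stmt12 (l : ℕ) (hl : 2 ≤ l) (q μ : ℂ) (hq : q ≠ 0)
    (i j : Idx l) (hij : i ≠ j) (m1 n1 m2 n2 : ℤ) :
    oComm (eGen l q i j m1 n1) (e11 l q μ m2 n2) = (fun _ => 0) ∧
    oComm (eGen l q i i m1 n1) (e11 l q μ m2 n2) = (fun _ => 0) :=
  stmt12_general l q μ hq i j m1 n1 m2 n2
end

section
/- If μ = 0, then the subspace W ⊂ V of polynomials with zero constant term is a proper nonzero submodule of V under the operators {e_{ij}(m,n) : 1 ≤ i,j ≤ l, m,n ∈ Z} ∪ {D1, D2}; in particular each operator in this family maps W into W, so V is reducible. -/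
open MvPolynomial

/-! For `μ = 0` every operator of the family is a sum of terms `c • (x_i(m,n) * f)`, so it maps all
of `V`, not only `W`, into `W`; the variable `x_2(0,0)` and the constant `1` show `0 ≠ W ≠ V`. -/

theorem MvPolynomial.constantCoeff_finsum_eq_zero {σ R ι : Type*} [CommSemiring R]
    {f : ι → MvPolynomial σ R} (h : ∀ i, constantCoeff (f i) = 0) :
    constantCoeff (∑ᶠ i, f i) = 0 :=
  finsum_induction (fun p => constantCoeff p = 0) (map_zero _)
    (fun _ _ hp hq => by rw [map_add, hp, hq, add_zero]) h

section ConstantCoeff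

variable {l : ℕ} (p : V l)

theorem constantCoeff_eLow (i : Idx l) (m n : ℤ) : constantCoeff (eLow l i m n p) = 0 := by
  simp [eLow]

theorem constantCoeff_eGen (q : ℂ) (i j : Idx l) (m n : ℤ) :
    constantCoeff (eGen l q i j m n p) = 0 :=
  constantCoeff_finsum_eq_zero fun _ => by simp

theorem constantCoeff_e11_zero (q : ℂ) (m n : ℤ) : constantCoeff (e11 l q 0 m n p) = 0 := by
  rw [e11, map_sub,
    constantCoeff_finsum_eq_zero fun _ => constantCoeff_finsum_eq_zero fun _ => by simp]
  simp

theorem constantCoeff_eUp_zero (q : ℂ) (i : Idx l) (m n : ℤ) :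
    constantCoeff (eUp l q 0 i m n p) = 0 := by
  rw [eUp, map_sub,
    constantCoeff_finsum_eq_zero fun _ => constantCoeff_finsum_eq_zero fun _ => by simp]
  simp

theorem constantCoeff_D1 : constantCoeff (D1 l p) = 0 :=
  constantCoeff_finsum_eq_zero fun _ => constantCoeff_finsum_eq_zero fun _ => by simp

theorem constantCoeff_D2 : constantCoeff (D2 l p) = 0 :=
  constantCoeff_finsum_eq_zero fun _ => constantCoeff_finsum_eq_zero fun _ => by simp

end ConstantCoeff

theorem stmt19_general (l : ℕ) (hl : 2 ≤ l) (q : ℂ) :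
    (∀ p : V l, constantCoeff p = 0 →
      (∀ (i : Idx l) (m n : ℤ), constantCoeff (eLow l i m n p) = 0) ∧
      (∀ (i j : Idx l) (m n : ℤ), constantCoeff (eGen l q i j m n p) = 0) ∧
      (∀ m n : ℤ, constantCoeff (e11 l q 0 m n p) = 0) ∧
      (∀ (i : Idx l) (m n : ℤ), constantCoeff (eUp l q 0 i m n p) = 0) ∧
      constantCoeff (D1 l p) = 0 ∧ constantCoeff (D2 l p) = 0) ∧
    (∃ p : V l, constantCoeff p = 0 ∧ p ≠ 0) ∧
    (∃ p : V l, constantCoeff p ≠ 0) :=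
  ⟨fun p _ => ⟨constantCoeff_eLow p, constantCoeff_eGen p q, constantCoeff_e11_zero p q,
      constantCoeff_eUp_zero p q, constantCoeff_D1 p, constantCoeff_D2 p⟩,
    ⟨X (⟨2, le_rfl, hl⟩, 0, 0), constantCoeff_X _ _, X_ne_zero _⟩,
    ⟨1, by simp⟩⟩

theorem stmt19 (l : ℕ) (hl : 2 ≤ l) (q : ℂ) (hq : q ≠ 0) :
    (∀ p : V l, constantCoeff p = 0 →
      (∀ (i : Idx l) (m n : ℤ), constantCoeff (eLow l i m n p) = 0) ∧
      (∀ (i j : Idx l) (m n : ℤ), constantCoeff (eGen l q i j m n p) = 0) ∧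
      (∀ m n : ℤ, constantCoeff (e11 l q 0 m n p) = 0) ∧
      (∀ (i : Idx l) (m n : ℤ), constantCoeff (eUp l q 0 i m n p) = 0) ∧
      constantCoeff (D1 l p) = 0 ∧ constantCoeff (D2 l p) = 0) ∧
    (∃ p : V l, constantCoeff p = 0 ∧ p ≠ 0) ∧
    (∃ p : V l, constantCoeff p ≠ 0) :=
  stmt19_general l hl q
end
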